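/- Let B(n) denote the set of canonical weight sequences of rooted trees of order n, and for 1 ≤ q ≤ n-1 let A_q(n) be the set of pairs (a, b) ∈ B(q) × B(n-q) such that a ≽ b^#, where b^# is b with its first element removed and a ≽ t means a ≥ t lexicographically or a is a prefix of t. Then the map β(a, b) = n ⊕ a ⊕ b^# is a bijection from the union of the A_q(n) for 1 ≤ q ≤ n-1 onto B(n). -/

import Mathlib

inductive OTree : Type
  | node : List OTree → OTree

namespace OTree

def size : OTree → ℕ
  | .node cs => (cs.attach.map (fun c => size c.1)).sum + 1
decreasing_by simp only [OTree.node.sizeOf_spec]; have := List.sizeOf_lt_of_mem c.2; omega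

def ws : OTree → List ℕ
  | .node cs => size (.node cs) :: (cs.attach.map (fun c => ws c.1)).flatten
decreasing_by simp only [OTree.node.sizeOf_spec]; have := List.sizeOf_lt_of_mem c.2; omega

def preorder : OTree → List OTree
  | .node cs => .node cs :: (cs.attach.map (fun c => preorder c.1)).flatten
decreasing_by simp only [OTree.node.sizeOf_spec]; have := List.sizeOf_lt_of_mem c.2; omega

lemma size_pos (R : OTree) : 0 < R.size := by
  cases R with | node cs => simp only [OTree.size]; omega

end OTree

inductive RIso : OTree → OTree → Prop
  | node {cs cs' : List OTree} (l : List OTree) (hp : l.Perm cs')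
      (hlen : cs.length = l.length)
      (h : ∀ (i : ℕ) (h1 : i < cs.length) (h2 : i < l.length), RIso cs[i] l[i]) :
      RIso (.node cs) (.node cs')

inductive Canonical : OTree → Prop
  | node {cs : List OTree}
      (hchain : List.Chain' (fun u v => OTree.ws v ≤ OTree.ws u) cs)
      (h : ∀ c ∈ cs, Canonical c) : Canonical (.node cs)

def Centroidal {V : Type} [Fintype V] (G : SimpleGraph V) (u : V) : Prop :=
  ∀ v : ↥{x : V | x ≠ u},
    2 * Nat.card {w : ↥{x : V | x ≠ u} | (G.induce {x : V | x ≠ u}).Reachable v w}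
      ≤ Fintype.card V

def IsParent (w : List ℕ) (i j : ℕ) : Prop :=
  i < j ∧ j < i + w.getD i 0 ∧ ∀ k, i < k → k < j → ¬ (j < k + w.getD k 0)

def graphOf (R : OTree) : SimpleGraph (Fin R.size) :=
  SimpleGraph.fromRel (fun i j => IsParent R.ws i.1 j.1)

def rootIdx (R : OTree) : Fin R.size := ⟨0, R.size_pos⟩

def B (n : ℕ) : Set (List ℕ) := {s | ∃ R : OTree, Canonical R ∧ R.size = n ∧ R.ws = s}

def Succeq (s t : List ℕ) : Prop := t ≤ s ∨ s <+: t

def A (q n : ℕ) : Set (List ℕ × List ℕ) :=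
  {p | p.1 ∈ B q ∧ p.2 ∈ B (n - q) ∧ Succeq p.1 p.2.tail}

def FwsUni {V : Type} [Fintype V] (G : SimpleGraph V) (s : List ℕ) : Prop :=
  ∃ R : OTree, Canonical R ∧ R.ws = s ∧
    ∃ f : graphOf R ≃g G, Centroidal G (f (rootIdx R))

def FwsBi {V : Type} [Fintype V] (G : SimpleGraph V) (s : List ℕ) : Prop :=
  ∃ u v, u ≠ v ∧ G.Adj u v ∧ Centroidal G u ∧ Centroidal G v ∧
  ∃ A B : OTree, Canonical A ∧ Canonical B ∧ B.ws ≤ A.ws ∧ s = A.ws ++ B.ws ∧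
  ∃ (fA : graphOf A ≃g (G.deleteEdges {s(u,v)}).induce
        {x | (G.deleteEdges {s(u,v)}).Reachable u x})
    (fB : graphOf B ≃g (G.deleteEdges {s(u,v)}).induce
        {x | (G.deleteEdges {s(u,v)}).Reachable v x}),
    (fA (rootIdx A)).1 = u ∧ (fB (rootIdx B)).1 = v

/-!
A rooted tree of order `n ≥ 2` splits at the root into its first root subtree `T` and the tree
`S` formed by the root and the remaining subtrees; then `ws = n ⊕ T.ws ⊕ S.ws^#`. The whole
tree is canonical iff `T` and `S` are and `T.ws` dominates the weight sequence of the second root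
subtree, which begins `S.ws^#`. Since weight sequences are prefix-free (each one starts with its
own length), that domination is exactly `T.ws ≽ S.ws^#`, and the split can be read back off
`n ⊕ a ⊕ b^#`.
-/

theorem List.append_lt_of_lt_of_not_prefix {α : Type*} [LinearOrder α] {l m : List α}
    (r : List α) (h : l < m) (hp : ¬ l <+: m) : l ++ r < m := by
  induction h with
  | nil => exact absurd List.nil_prefix hp
  | rel h => exact List.Lex.rel h
  | cons _ ih => exact List.Lex.cons (ih fun hpre => hp (List.cons_prefix_cons.mpr ⟨rfl, hpre⟩))

namespace OTree

theorem size_node (cs : List OTree) : (node cs).size = (cs.map size).sum + 1 := by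
  rw [size]; congr 2; simp

theorem ws_node (cs : List OTree) : (node cs).ws = (node cs).size :: (cs.map ws).flatten := by
  rw [ws]; congr 1; simp

theorem size_cons (c : OTree) (cs : List OTree) :
    (node (c :: cs)).size = c.size + (node cs).size := by
  simp only [size_node, List.map_cons, List.sum_cons]; omega

theorem ws_cons (c : OTree) (cs : List OTree) :
    (node (c :: cs)).ws = (node (c :: cs)).size :: (c.ws ++ (node cs).ws.tail) := by
  simp only [ws_node, List.map_cons, List.flatten_cons, List.tail_cons]

theorem ws_eq_size_cons_tail (R : OTree) : R.ws = R.size :: R.ws.tail := by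
  cases R; rw [ws_node]; rfl

theorem length_ws : ∀ R : OTree, R.ws.length = R.size
  | node cs => by
    rw [ws_node, size_node, List.length_cons, List.length_flatten, List.map_map]
    congr 2
    exact List.map_congr_left fun c _ => length_ws c
decreasing_by simp only [node.sizeOf_spec]; have := List.sizeOf_lt_of_mem ‹c ∈ cs›; omega

theorem ws_eq_of_prefix_append {c d : OTree} {r : List ℕ} (h : c.ws <+: d.ws ++ r) :
    c.ws = d.ws := by
  have hsize : c.size = d.size := by
    rw [c.ws_eq_size_cons_tail, d.ws_eq_size_cons_tail, List.cons_append,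
      List.cons_prefix_cons] at h
    exact h.1
  have hlen : c.ws.length = d.ws.length := by rw [length_ws, length_ws, hsize]
  exact (List.prefix_of_prefix_length_le h (d.ws.prefix_append r) hlen.le).eq_of_length hlen

theorem succeq_ws_tail_iff {c : OTree} {cs : List OTree} :
    Succeq c.ws (node cs).ws.tail ↔ ∀ d ∈ cs.head?, d.ws ≤ c.ws := by
  cases cs with
  | nil =>
    simpa [Succeq, ws_node] using .inl (not_lt.mp fun h => List.not_lex_nil (r := (· < ·)) h)
  | cons d ds =>
    rw [ws_cons, List.tail_cons]
    simp only [List.head?_cons, Option.mem_some_iff, forall_eq']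
    constructor
    · rintro (hle | hpre)
      · exact not_lt.mp fun hlt => hle.not_gt (List.Lex.append_right _ _ hlt)
      · exact (ws_eq_of_prefix_append hpre).ge
    · intro hle
      rcases hle.eq_or_lt with heq | hlt
      · exact .inr (heq ▸ List.prefix_append _ _)
      · refine .inl (List.append_lt_of_lt_of_not_prefix _ hlt fun hpre => hlt.ne ?_).le
        exact ws_eq_of_prefix_append (r := []) (by rwa [List.append_nil])

end OTree

open OTree

theorem canonical_cons_iff {c : OTree} {cs : List OTree} :
    Canonical (.node (c :: cs)) ↔
      Canonical c ∧ Canonical (.node cs) ∧ ∀ d ∈ cs.head?, d.ws ≤ c.ws := by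
  constructor
  · rintro ⟨hchain, hall⟩
    exact ⟨hall c List.mem_cons_self,
      .node hchain.tail fun d hd => hall d (List.mem_cons_of_mem c hd),
      (List.isChain_cons.mp hchain).1⟩
  · rintro ⟨hc, ⟨hchain, hall⟩, hhead⟩
    refine .node (List.isChain_cons.mpr ⟨hhead, hchain⟩) fun d hd => ?_
    rcases List.mem_cons.mp hd with rfl | hd
    exacts [hc, hall d hd]

theorem eq_cons_tail_of_mem_B {s : List ℕ} {k : ℕ} (hs : s ∈ B k) : s = k :: s.tail := by
  obtain ⟨R, -, rfl, rfl⟩ := hs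
  exact R.ws_eq_size_cons_tail

theorem eq_of_mem_B_of_append_eq {q q' : ℕ} {a a' t t' : List ℕ} (ha : a ∈ B q)
    (ha' : a' ∈ B q') (h : a ++ t = a' ++ t') : a = a' ∧ t = t' := by
  obtain ⟨T, -, rfl, rfl⟩ := ha
  obtain ⟨T', -, rfl, rfl⟩ := ha'
  have hT : T.ws = T'.ws := ws_eq_of_prefix_append (h ▸ List.prefix_append _ _)
  exact ⟨hT, List.append_cancel_left (hT ▸ h)⟩

theorem cons_append_tail_mem_B {q m : ℕ} {a b : List ℕ} (ha : a ∈ B q) (hb : b ∈ B m)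
    (hab : Succeq a b.tail) : (q + m) :: (a ++ b.tail) ∈ B (q + m) := by
  obtain ⟨T, hT, rfl, rfl⟩ := ha
  obtain ⟨⟨cs⟩, hS, rfl, rfl⟩ := hb
  have hsize := size_cons T cs
  refine ⟨.node (T :: cs), canonical_cons_iff.mpr ⟨hT, hS, succeq_ws_tail_iff.mp hab⟩, hsize, ?_⟩
  rw [ws_cons, hsize]

theorem exists_mem_A_of_mem_B {n : ℕ} {s : List ℕ} (hn : 2 ≤ n) (hs : s ∈ B n) :
    ∃ q ∈ Set.Icc 1 (n - 1), ∃ p ∈ A q n, s = n :: (p.1 ++ p.2.tail) := by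
  obtain ⟨⟨_ | ⟨c, cs⟩⟩, hR, rfl, rfl⟩ := hs
  · simp [size_node] at hn
  obtain ⟨hc, hcs, hhead⟩ := canonical_cons_iff.mp hR
  have hsize := size_cons c cs
  have hpos := (node cs).size_pos
  refine ⟨c.size, ⟨c.size_pos, by omega⟩, (c.ws, (node cs).ws),
    ⟨⟨c, hc, rfl, rfl⟩, ⟨node cs, hcs, by omega, rfl⟩, succeq_ws_tail_iff.mpr hhead⟩, ws_cons c cs⟩

theorem stmt13 (n : ℕ) (hn : 2 ≤ n) :
    Set.BijOn (fun p : List ℕ × List ℕ => n :: (p.1 ++ p.2.tail))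
      (⋃ q ∈ Set.Icc 1 (n - 1), A q n) (B n) := by
  simp only [Set.BijOn, Set.MapsTo, Set.InjOn, Set.mem_iUnion, Set.mem_Icc]
  refine ⟨?_, ?_, fun s hs => ?_⟩
  · rintro ⟨a, b⟩ ⟨q, ⟨-, hq⟩, ha, hb, hab⟩
    simpa only [Nat.add_sub_cancel' (show q ≤ n by omega)] using cons_append_tail_mem_B ha hb hab
  · rintro ⟨a, b⟩ ⟨q, -, ha, hb, -⟩ ⟨a', b'⟩ ⟨q', -, ha', hb', -⟩ h
    dsimp only at ha hb ha' hb' h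
    obtain ⟨rfl, htail⟩ := eq_of_mem_B_of_append_eq ha ha' (List.cons_injective h)
    obtain rfl : q = q' := List.head_eq_of_cons_eq ((eq_cons_tail_of_mem_B ha).symm.trans
      (eq_cons_tail_of_mem_B ha'))
    rw [eq_cons_tail_of_mem_B hb, eq_cons_tail_of_mem_B hb', htail]
  · obtain ⟨q, hq, p, hp, rfl⟩ := exists_mem_A_of_mem_B hn hs
    exact ⟨p, Set.mem_biUnion hq hp, rfl⟩
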